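/- arXiv:2308.02324 — 2 statements merged into one kernel-verified Lean document; each statement's English description precedes it below -/
import Mathlib

section
/- Let P > 0 and {θ_l} be i.i.d. Uniform(0, 2π). With R̄(i) = E[log(1 + |∑_{l=1}^{i} e^{iθ_l}|² P)], the sequence R̄(i) tends to infinity as i → ∞. -/
/-!
Write `Z_l = e^{iθ_l}` and `S_n = ∑_{l<n} Z_l`. The `Z_l` are independent, of modulus one, and
satisfy `E Z = E Z² = 0`. Expanding `|S_n + Z_n|²` and `|S_n + Z_n|⁴` and integrating by
independence gives `E|S_n|² = n` and `E|S_n|⁴ = 2n² - n`, so `|S_n|²` is not concentrated near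
zero. Concavity of `log` gives `(x - x²/B)/B · log(1 + BP) ≤ log(1 + xP)` for every `x ≥ 0`;
taking expectations with `x = |S_n|²` and `B = 4n` yields `R̄(n) ≥ log(1 + 4nP)/8 → ∞`.
-/

open Real MeasureTheory ProbabilityTheory Filter ComplexConjugate

lemma integrable_comp_of_norm_le {Ω E F : Type*} [MeasurableSpace Ω] {μ : Measure Ω}
    [IsFiniteMeasure μ] [NormedAddCommGroup E] [MeasurableSpace E] [OpensMeasurableSpace E]
    [ProperSpace E] [NormedAddCommGroup F] {f : Ω → E} (hf : Measurable f) {C : ℝ}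
    (hC : ∀ ω, ‖f ω‖ ≤ C) {φ : E → F} (hφ : Continuous φ) :
    Integrable (fun ω => φ (f ω)) μ := by
  obtain ⟨M, hM⟩ :=
    (isCompact_closedBall (0 : E) C).exists_bound_of_continuousOn hφ.continuousOn
  exact .of_bound (hφ.comp_aestronglyMeasurable hf.aestronglyMeasurable) M
    (ae_of_all _ fun ω => hM _ (mem_closedBall_zero_iff.2 (hC ω)))

lemma integrable_comp₂_of_norm_le {Ω E E' F : Type*} [MeasurableSpace Ω] {μ : Measure Ω}
    [IsFiniteMeasure μ] [NormedAddCommGroup E] [MeasurableSpace E] [BorelSpace E] [ProperSpace E]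
    [NormedAddCommGroup E'] [MeasurableSpace E'] [BorelSpace E'] [ProperSpace E']
    [SecondCountableTopology E] [SecondCountableTopology E'] [NormedAddCommGroup F]
    {X : Ω → E} {Y : Ω → E'} (hX : Measurable X) (hY : Measurable Y) {C D : ℝ}
    (hXC : ∀ ω, ‖X ω‖ ≤ C) (hYD : ∀ ω, ‖Y ω‖ ≤ D) {φ : E → E' → F}
    (hφ : Continuous (Function.uncurry φ)) : Integrable (fun ω => φ (X ω) (Y ω)) μ :=
  integrable_comp_of_norm_le (hX.prodMk hY) (C := max C D)
    (fun ω => max_le_max (hXC ω) (hYD ω)) hφ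

lemma div_mul_log_one_add_mul_le {y B c : ℝ} (hy : 0 ≤ y) (hyB : y ≤ B) (hc : 0 ≤ c) :
    y / B * Real.log (1 + B * c) ≤ Real.log (1 + y * c) := by
  rcases hy.eq_or_lt with rfl | hy
  · simp
  have hB : 0 < B := hy.trans_le hyB
  have h := strictConcaveOn_log_Ioi.concaveOn.2 (Set.mem_Ioi.2 one_pos)
    (Set.mem_Ioi.2 (by positivity : (0 : ℝ) < 1 + B * c))
    (sub_nonneg.2 ((div_le_one hB).2 hyB)) (by positivity) (sub_add_cancel 1 (y / B))
  have hpt : (1 - y / B) • (1 : ℝ) + (y / B) • (1 + B * c) = 1 + y * c := by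
    simp only [smul_eq_mul]
    field_simp
    ring
  rw [hpt] at h
  simpa using h

lemma sub_sq_div_div_mul_log_le {x B c : ℝ} (hx : 0 ≤ x) (hB : 0 < B) (hc : 0 ≤ c) :
    (x - x ^ 2 / B) / B * Real.log (1 + B * c) ≤ Real.log (1 + x * c) := by
  have hlog : 0 ≤ Real.log (1 + B * c) := Real.log_nonneg (by nlinarith)
  rcases le_or_gt x B with hxB | hBx
  · calc (x - x ^ 2 / B) / B * Real.log (1 + B * c)
        ≤ x / B * Real.log (1 + B * c) := by gcongr; linarith [show 0 ≤ x ^ 2 / B by positivity]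
      _ ≤ Real.log (1 + x * c) := div_mul_log_one_add_mul_le hx hxB hc
  · have hneg : x - x ^ 2 / B ≤ 0 := by
      rw [sub_nonpos, le_div_iff₀ hB]; nlinarith
    calc (x - x ^ 2 / B) / B * Real.log (1 + B * c) ≤ 0 :=
          mul_nonpos_of_nonpos_of_nonneg (div_nonpos_of_nonpos_of_nonneg hneg hB.le) hlog
      _ ≤ Real.log (1 + x * c) := Real.log_nonneg (by nlinarith)

section LogMoment

variable {Ω : Type*} [MeasurableSpace Ω] {μ : Measure Ω} {X : Ω → ℝ}

lemma integrable_log_one_add_mul (hX0 : ∀ ω, 0 ≤ X ω) (hX : Integrable X μ) {c : ℝ}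
    (hc : 0 ≤ c) : Integrable (fun ω => Real.log (1 + X ω * c)) μ := by
  have hmeas : AEStronglyMeasurable (fun ω => Real.log (1 + X ω * c)) μ :=
    (Real.measurable_log.comp_aemeasurable
      ((hX.aemeasurable.mul_const c).const_add 1)).aestronglyMeasurable
  refine (hX.mul_const c).mono' hmeas (ae_of_all _ fun ω => ?_)
  have hXc : 0 ≤ X ω * c := mul_nonneg (hX0 ω) hc
  rw [Real.norm_of_nonneg (Real.log_nonneg (by linarith))]
  linarith [Real.log_le_sub_one_of_pos (by linarith : 0 < 1 + X ω * c)]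

lemma integral_sub_sq_div_div_mul_log_le (hX0 : ∀ ω, 0 ≤ X ω) (hX : Integrable X μ)
    (hX2 : Integrable (fun ω => X ω ^ 2) μ) {B c : ℝ} (hB : 0 < B) (hc : 0 ≤ c) :
    (∫ ω, X ω ∂μ - (∫ ω, X ω ^ 2 ∂μ) / B) / B * Real.log (1 + B * c)
      ≤ ∫ ω, Real.log (1 + X ω * c) ∂μ := by
  rw [← integral_div, ← integral_sub hX (hX2.div_const B), ← integral_div,
    ← integral_mul_const]
  exact integral_mono (((hX.sub (hX2.div_const B)).div_const B).mul_const _)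
    (integrable_log_one_add_mul hX0 hX hc) fun ω => sub_sq_div_div_mul_log_le (hX0 ω) hB hc

lemma log_one_add_mul_le_integral_of_integral_sq_le (hX0 : ∀ ω, 0 ≤ X ω)
    (hX : Integrable X μ) (hX2 : Integrable (fun ω => X ω ^ 2) μ) (hm : 0 < ∫ ω, X ω ∂μ)
    (hmoment : ∫ ω, X ω ^ 2 ∂μ ≤ 2 * (∫ ω, X ω ∂μ) ^ 2) {c : ℝ} (hc : 0 ≤ c) :
    Real.log (1 + 4 * (∫ ω, X ω ∂μ) * c) / 8 ≤ ∫ ω, Real.log (1 + X ω * c) ∂μ := by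
  set m := ∫ ω, X ω ∂μ
  refine le_trans ?_
    (integral_sub_sq_div_div_mul_log_le hX0 hX hX2 (by positivity : 0 < 4 * m) hc)
  have hq : (∫ ω, X ω ^ 2 ∂μ) / (4 * m) ≤ m / 2 := by
    rw [div_le_iff₀ (by positivity)]
    nlinarith
  have hcoef : 1 / 8 ≤ (m - (∫ ω, X ω ^ 2 ∂μ) / (4 * m)) / (4 * m) := by
    rw [le_div_iff₀ (by positivity)]
    linarith
  rw [div_eq_mul_one_div, mul_comm]
  exact mul_le_mul_of_nonneg_right hcoef (Real.log_nonneg (by nlinarith))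

end LogMoment

lemma integral_exp_mul_I_pow_eq_zero {Ω : Type*} [MeasurableSpace Ω] {μ : Measure Ω}
    {θ : Ω → ℝ} (hθ : Measurable θ)
    (hunif : μ.map θ = (ENNReal.ofReal (2 * π))⁻¹ • volume.restrict (Set.Icc 0 (2 * π)))
    {n : ℕ} (hn : n ≠ 0) : ∫ ω, Complex.exp (θ ω * Complex.I) ^ n ∂μ = 0 := by
  have hexp : ∀ x : ℝ, Complex.exp (x * Complex.I) ^ n = Complex.exp (n * Complex.I * x) := by
    intro x
    rw [← Complex.exp_nat_mul]
    ring_nf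
  simp_rw [hexp]
  rw [← integral_map (f := fun x : ℝ => Complex.exp (n * Complex.I * x)) hθ.aemeasurable
      (by fun_prop), hunif, integral_smul_measure,
    integral_Icc_eq_integral_Ioc, ← intervalIntegral.integral_of_le (by positivity),
    integral_exp_mul_complex (by simp [hn, Complex.I_ne_zero])]
  have : Complex.exp (n * Complex.I * (2 * π)) = 1 := by
    rw [← Complex.exp_nat_mul_two_pi_mul_I n]
    ring_nf
  simp [this]

lemma norm_add_sq_of_norm_eq_one {s z : ℂ} (hz : ‖z‖ = 1) :
    ‖s + z‖ ^ 2 = ‖s‖ ^ 2 + 1 + 2 * (conj s * z).re := by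
  have hz2 : Complex.normSq z = 1 := by rw [← Complex.sq_norm, hz, one_pow]
  rw [Complex.sq_norm, Complex.sq_norm, Complex.normSq_add, hz2, ← Complex.conj_re, map_mul,
    Complex.conj_conj, mul_comm]

lemma norm_add_pow_four_of_norm_eq_one {s z : ℂ} (hz : ‖z‖ = 1) :
    ‖s + z‖ ^ 4 = (‖s‖ ^ 4 + 4 * ‖s‖ ^ 2 + 1)
      + 4 * ((‖s‖ ^ 2 + 1) * (conj s * z).re) + 2 * (conj s ^ 2 * z ^ 2).re := by
  set w := conj s * z
  have hw : ‖w‖ = ‖s‖ := by simp [w, hz]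
  have hre : 2 * w.re ^ 2 = ‖w‖ ^ 2 + (w ^ 2).re := by
    rw [Complex.sq_norm, Complex.normSq_apply]
    simp only [pow_two, Complex.mul_re]
    ring
  rw [show ‖s + z‖ ^ 4 = (‖s + z‖ ^ 2) ^ 2 by ring, norm_add_sq_of_norm_eq_one hz,
    show conj s ^ 2 * z ^ 2 = w ^ 2 by ring]
  linear_combination 2 * hre + 2 * (‖w‖ + ‖s‖) * hw

section Increment

variable {Ω : Type*} [MeasurableSpace Ω] {μ : Measure Ω} [IsProbabilityMeasure μ]
  {S Z : Ω → ℂ} {C : ℝ}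

lemma integral_re_mul_eq_zero_of_indepFun (hSZ : IndepFun S Z μ) (hS : Measurable S)
    (hZ : Measurable Z) (hSC : ∀ ω, ‖S ω‖ ≤ C) {D : ℝ} (hZD : ∀ ω, ‖Z ω‖ ≤ D) {f : ℂ → ℂ}
    (hf : Continuous f) {k : ℕ} (hZk : ∫ ω, Z ω ^ k ∂μ = 0) :
    ∫ ω, (f (S ω) * Z ω ^ k).re ∂μ = 0 := by
  have hint : Integrable (fun ω => f (S ω) * Z ω ^ k) μ :=
    integrable_comp₂_of_norm_le hS hZ hSC hZD (φ := fun s z => f s * z ^ k) (by fun_prop)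
  refine (integral_re hint).trans ?_
  rw [hSZ.integral_fun_comp_mul_comp (g := (· ^ k)) hS.aemeasurable hZ.aemeasurable
    hf.aestronglyMeasurable (by fun_prop)]
  simp [hZk]

lemma integral_norm_add_sq_of_indepFun (hSZ : IndepFun S Z μ) (hS : Measurable S)
    (hZ : Measurable Z) (hSC : ∀ ω, ‖S ω‖ ≤ C) (hZ1 : ∀ ω, ‖Z ω‖ = 1)
    (hZ0 : ∫ ω, Z ω ∂μ = 0) :
    ∫ ω, ‖S ω + Z ω‖ ^ 2 ∂μ = ∫ ω, ‖S ω‖ ^ 2 ∂μ + 1 := by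
  have hcross : ∫ ω, (conj (S ω) * Z ω).re ∂μ = 0 := by
    simpa using integral_re_mul_eq_zero_of_indepFun hSZ hS hZ hSC (fun ω => (hZ1 ω).le)
      Complex.continuous_conj (k := 1) (by simpa using hZ0)
  have hS2 : Integrable (fun ω => ‖S ω‖ ^ 2) μ :=
    integrable_comp_of_norm_le hS hSC (φ := (‖·‖ ^ 2)) (by fun_prop)
  have hcross_int : Integrable (fun ω => (conj (S ω) * Z ω).re) μ :=
    integrable_comp₂_of_norm_le hS hZ hSC (fun ω => (hZ1 ω).le)
      (φ := fun s z => (conj s * z).re) (by fun_prop)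
  have hS2_add : Integrable (fun ω => ‖S ω‖ ^ 2 + 1) μ := hS2.add (integrable_const 1)
  rw [integral_congr_ae (ae_of_all _ fun ω => norm_add_sq_of_norm_eq_one (hZ1 ω)),
    integral_add hS2_add (hcross_int.const_mul 2), integral_add hS2 (integrable_const 1),
    integral_const_mul, hcross]
  simp

lemma integral_norm_add_pow_four_of_indepFun (hSZ : IndepFun S Z μ) (hS : Measurable S)
    (hZ : Measurable Z) (hSC : ∀ ω, ‖S ω‖ ≤ C) (hZ1 : ∀ ω, ‖Z ω‖ = 1)
    (hZ0 : ∫ ω, Z ω ∂μ = 0) (hZ0' : ∫ ω, Z ω ^ 2 ∂μ = 0) :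
    ∫ ω, ‖S ω + Z ω‖ ^ 4 ∂μ = ∫ ω, ‖S ω‖ ^ 4 ∂μ + 4 * ∫ ω, ‖S ω‖ ^ 2 ∂μ + 1 := by
  have hcross₁ : ∫ ω, (‖S ω‖ ^ 2 + 1) * (conj (S ω) * Z ω).re ∂μ = 0 := by
    simpa only [pow_one, mul_assoc, Complex.re_ofReal_mul] using
      integral_re_mul_eq_zero_of_indepFun hSZ hS hZ hSC (fun ω => (hZ1 ω).le)
        (f := fun s => ((‖s‖ ^ 2 + 1 : ℝ) : ℂ) * conj s)
        ((Complex.continuous_ofReal.comp (by fun_prop)).mul Complex.continuous_conj) (k := 1)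
        (by simpa using hZ0)
  have hcross₂ : ∫ ω, (conj (S ω) ^ 2 * Z ω ^ 2).re ∂μ = 0 :=
    integral_re_mul_eq_zero_of_indepFun hSZ hS hZ hSC (fun ω => (hZ1 ω).le)
      (Complex.continuous_conj.pow 2) hZ0'
  have hS_int : ∀ φ : ℂ → ℝ, Continuous φ → Integrable (fun ω => φ (S ω)) μ := fun φ hφ =>
    integrable_comp_of_norm_le hS hSC hφ
  have hSZ_int : ∀ φ : ℂ → ℂ → ℝ, Continuous (Function.uncurry φ) →
      Integrable (fun ω => φ (S ω) (Z ω)) μ := fun φ hφ =>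
    integrable_comp₂_of_norm_le hS hZ hSC (fun ω => (hZ1 ω).le) hφ
  have h4 : Integrable (fun ω => ‖S ω‖ ^ 4) μ := hS_int (‖·‖ ^ 4) (by fun_prop)
  have h2 : Integrable (fun ω => 4 * ‖S ω‖ ^ 2) μ := hS_int (4 * ‖·‖ ^ 2) (by fun_prop)
  have h42 : Integrable (fun ω => ‖S ω‖ ^ 4 + 4 * ‖S ω‖ ^ 2) μ := h4.add h2
  have h421 : Integrable (fun ω => ‖S ω‖ ^ 4 + 4 * ‖S ω‖ ^ 2 + 1) μ :=
    h42.add (integrable_const 1)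
  have hc₁ : Integrable (fun ω => 4 * ((‖S ω‖ ^ 2 + 1) * (conj (S ω) * Z ω).re)) μ :=
    hSZ_int (fun s z => 4 * ((‖s‖ ^ 2 + 1) * (conj s * z).re)) (by fun_prop)
  have hc₂ : Integrable (fun ω => 2 * (conj (S ω) ^ 2 * Z ω ^ 2).re) μ :=
    hSZ_int (fun s z => 2 * (conj s ^ 2 * z ^ 2).re) (by fun_prop)
  have h421c : Integrable (fun ω => ‖S ω‖ ^ 4 + 4 * ‖S ω‖ ^ 2 + 1
      + 4 * ((‖S ω‖ ^ 2 + 1) * (conj (S ω) * Z ω).re)) μ := h421.add hc₁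
  rw [integral_congr_ae (ae_of_all _ fun ω => norm_add_pow_four_of_norm_eq_one (hZ1 ω)),
    integral_add h421c hc₂, integral_add h421 hc₁, integral_add h42 (integrable_const 1),
    integral_add h4 h2, integral_const_mul, integral_const_mul, integral_const_mul, hcross₁,
    hcross₂]
  simp

end Increment

lemma norm_sum_range_le_of_norm_eq_one {E : Type*} [SeminormedAddCommGroup E] {z : ℕ → E}
    (hz : ∀ l, ‖z l‖ = 1) (n : ℕ) : ‖∑ l ∈ Finset.range n, z l‖ ≤ n :=
  (norm_sum_le _ _).trans_eq (by simp [hz])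

section PartialSums

variable {Ω : Type*} [MeasurableSpace Ω] {μ : Measure Ω} {Z : ℕ → Ω → ℂ}

lemma ProbabilityTheory.iIndepFun.indepFun_sum_range_apply (hindep : iIndepFun Z μ)
    (hZ : ∀ l, Measurable (Z l)) (n : ℕ) :
    IndepFun (fun ω => ∑ l ∈ Finset.range n, Z l ω) (Z n) μ := by
  simpa only [Finset.sum_fn] using hindep.indepFun_sum_range_succ hZ n

variable [IsProbabilityMeasure μ]

lemma integral_norm_sum_range_sq (hindep : iIndepFun Z μ) (hZ : ∀ l, Measurable (Z l))
    (hZ1 : ∀ l ω, ‖Z l ω‖ = 1) (hZ0 : ∀ l, ∫ ω, Z l ω ∂μ = 0) (n : ℕ) :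
    ∫ ω, ‖∑ l ∈ Finset.range n, Z l ω‖ ^ 2 ∂μ = n := by
  induction n with
  | zero => simp
  | succ n ih =>
    simp only [Finset.sum_range_succ]
    rw [integral_norm_add_sq_of_indepFun (hindep.indepFun_sum_range_apply hZ n)
      (Finset.measurable_sum _ fun l _ => hZ l) (hZ n)
      (fun ω => norm_sum_range_le_of_norm_eq_one (hZ1 · ω) n) (hZ1 n) (hZ0 n), ih]
    push_cast
    ring

lemma integral_norm_sum_range_pow_four (hindep : iIndepFun Z μ) (hZ : ∀ l, Measurable (Z l))
    (hZ1 : ∀ l ω, ‖Z l ω‖ = 1) (hZ0 : ∀ l, ∫ ω, Z l ω ∂μ = 0)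
    (hZ0' : ∀ l, ∫ ω, Z l ω ^ 2 ∂μ = 0) (n : ℕ) :
    ∫ ω, ‖∑ l ∈ Finset.range n, Z l ω‖ ^ 4 ∂μ = 2 * n ^ 2 - n := by
  induction n with
  | zero => simp
  | succ n ih =>
    simp only [Finset.sum_range_succ]
    rw [integral_norm_add_pow_four_of_indepFun (hindep.indepFun_sum_range_apply hZ n)
      (Finset.measurable_sum _ fun l _ => hZ l) (hZ n)
      (fun ω => norm_sum_range_le_of_norm_eq_one (hZ1 · ω) n) (hZ1 n) (hZ0 n) (hZ0' n), ih,
      integral_norm_sum_range_sq hindep hZ hZ1 hZ0]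
    push_cast
    ring

lemma log_one_add_mul_le_integral_log_norm_sum_range (hindep : iIndepFun Z μ)
    (hZ : ∀ l, Measurable (Z l)) (hZ1 : ∀ l ω, ‖Z l ω‖ = 1) (hZ0 : ∀ l, ∫ ω, Z l ω ∂μ = 0)
    (hZ0' : ∀ l, ∫ ω, Z l ω ^ 2 ∂μ = 0) {c : ℝ} (hc : 0 ≤ c) {n : ℕ} (hn : 1 ≤ n) :
    Real.log (1 + 4 * n * c) / 8
      ≤ ∫ ω, Real.log (1 + ‖∑ l ∈ Finset.range n, Z l ω‖ ^ 2 * c) ∂μ := by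
  have hS : Measurable fun ω => ∑ l ∈ Finset.range n, Z l ω :=
    Finset.measurable_sum _ fun l _ => hZ l
  have hSn : ∀ ω, ‖∑ l ∈ Finset.range n, Z l ω‖ ≤ n :=
    fun ω => norm_sum_range_le_of_norm_eq_one (hZ1 · ω) n
  have hm := integral_norm_sum_range_sq hindep hZ hZ1 hZ0 n
  have hm2 := integral_norm_sum_range_pow_four hindep hZ hZ1 hZ0 hZ0' n
  have h := log_one_add_mul_le_integral_of_integral_sq_le (fun ω => sq_nonneg _)
    (integrable_comp_of_norm_le hS hSn (φ := (‖·‖ ^ 2)) (by fun_prop))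
    (integrable_comp_of_norm_le hS hSn (φ := fun z => (‖z‖ ^ 2) ^ 2) (by fun_prop))
    (by rw [hm]; exact_mod_cast hn) (by simp only [← pow_mul]; rw [hm, hm2]; nlinarith) hc
  rwa [hm] at h

end PartialSums

/-- With i.i.d. phases `θ_l ~ Uniform(0, 2π)`, the sequence
`R̄(i) = E[log(1 + |∑_{l<i} e^{iθ_l}|² P)]` tends to infinity as `i → ∞`. -/
theorem rate_tendsto_atTop
    {Ω : Type*} [MeasurableSpace Ω] (μ : Measure Ω) [IsProbabilityMeasure μ]
    (θ : ℕ → Ω → ℝ) (hmeas : ∀ l, Measurable (θ l))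
    (hindep : iIndepFun θ μ)
    (hunif : ∀ l, μ.map (θ l)
      = (ENNReal.ofReal (2 * π))⁻¹ • volume.restrict (Set.Icc 0 (2 * π)))
    (P : ℝ) (hP : 0 < P) :
    Tendsto (fun i : ℕ =>
      ∫ ω, Real.log (1 + ‖
        (∑ l ∈ Finset.range i, Complex.exp (θ l ω * Complex.I))‖ ^ 2 * P) ∂μ)
      atTop atTop := by
  set Z : ℕ → Ω → ℂ := fun l ω => Complex.exp (θ l ω * Complex.I)
  have hZ : ∀ l, Measurable (Z l) := fun l => by fun_prop
  have hZ1 : ∀ l ω, ‖Z l ω‖ = 1 := fun l ω => Complex.norm_exp_ofReal_mul_I _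
  have hZindep : iIndepFun Z μ :=
    hindep.comp (fun _ x => Complex.exp (x * Complex.I)) fun _ => by fun_prop
  have hZ0 : ∀ l, ∫ ω, Z l ω ∂μ = 0 := fun l => by
    simpa using integral_exp_mul_I_pow_eq_zero (hmeas l) (hunif l) one_ne_zero
  have hZ0' : ∀ l, ∫ ω, Z l ω ^ 2 ∂μ = 0 := fun l =>
    integral_exp_mul_I_pow_eq_zero (hmeas l) (hunif l) two_ne_zero
  have hlower : ∀ᶠ n : ℕ in atTop, Real.log (1 + 4 * n * P) / 8
      ≤ ∫ ω, Real.log (1 + ‖∑ l ∈ Finset.range n, Z l ω‖ ^ 2 * P) ∂μ :=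
    (eventually_ge_atTop 1).mono fun n hn =>
      log_one_add_mul_le_integral_log_norm_sum_range hZindep hZ hZ1 hZ0 hZ0' hP.le hn
  have hlog : Tendsto (fun n : ℕ => Real.log (1 + 4 * n * P) / 8) atTop atTop :=
    (Real.tendsto_log_atTop.comp (tendsto_atTop_add_const_left _ 1
      ((tendsto_natCast_atTop_atTop.const_mul_atTop four_pos).atTop_mul_const hP))
      ).atTop_div_const (by norm_num)
  exact tendsto_atTop_mono' atTop hlower hlog
end

section
/- Let P > 0 and fix K, D ∈ ℕ with K ≥ 1. For each k, and i.i.d. θ₁,…,θ_L ~ Uniform(0,2π), define for b ∈ {0,1}^L and delays with fractional parts δ_l ∈ [0,1): F(b, δ, k) = E[log(1 + |∑_{l=1}^{L} b_l e^{iθ_l} G_l(k)|² P)] where G_l(k) = (1−δ_l) + δ_l e^{−2πi k/K}. Then for every b and k, F(b, δ, k) is minimized over δ ∈ [0,1)^L at δ = (1/2,…,1/2). -/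
/-!
Condition on all phases but one. For fixed `c`, the average of `log (1 + ‖c + e^{iθ} y‖² P)`
over a uniform phase `θ` has the closed form `log ((A + √(A² - B²)) / 2)`, with
`A = 1 + (‖c‖² + ‖y‖²) P` and `B = 2 ‖c‖ ‖y‖ P`, obtained by writing `1 + ‖c + z y‖² P` on the
unit circle as `‖p + w z‖²` with `‖w‖ < p` and applying the mean value property to the harmonic
function `log ‖p + w z‖`. The closed form is increasing in `‖y‖`, so by independence the expected
rate is increasing in each `‖b_l G_l(k)‖`; and `‖(1 - δ) + δ e^{iβ}‖` is smallest at `δ = 1/2`.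
-/

open Real MeasureTheory ProbabilityTheory

theorem sq_norm_add_mul_of_norm_eq_one (u v : ℂ) {z : ℂ} (hz : ‖z‖ = 1) :
    ‖u + v * z‖ ^ 2 = ‖u‖ ^ 2 + ‖v‖ ^ 2 + 2 * (starRingEnd ℂ u * v * z).re := by
  have hz' : Complex.normSq z = 1 := by rw [Complex.normSq_eq_norm_sq, hz, one_pow]
  simp only [← Complex.normSq_eq_norm_sq, Complex.normSq_add, Complex.normSq_mul, hz', mul_one]
  rw [← Complex.conj_re, map_mul, Complex.conj_conj, mul_assoc]

theorem circleAverage_log_norm_add_mul {a w : ℂ} (h : ‖w‖ < ‖a‖) :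
    circleAverage (fun z => log ‖a + w * z‖) 0 1 = log ‖a‖ := by
  have hne : ∀ z ∈ Metric.closedBall (0 : ℂ) |1|, a + w * z ≠ 0 := by
    intro z hz heq
    rw [abs_one, mem_closedBall_zero_iff] at hz
    have : ‖a‖ ≤ ‖w‖ := by
      calc ‖a‖ = ‖w * z‖ := by rw [eq_neg_of_add_eq_zero_left heq, norm_neg]
        _ ≤ ‖w‖ := by rw [norm_mul]; exact mul_le_of_le_one_right (norm_nonneg w) hz
    linarith
  simpa using InnerProductSpace.HarmonicOnNhd.circleAverage_eq
    (f := fun z => log ‖a + w * z‖) (c := 0) (R := 1) fun z hz =>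
      (by fun_prop : AnalyticAt ℂ (fun z => a + w * z) z).harmonicAt_log_norm (hne z hz)

theorem one_add_sq_norm_add_mul_eq {P p : ℝ} {c y z : ℂ} (hp : p ≠ 0)
    (hpq : p ^ 2 + (‖c‖ * ‖y‖ * P / p) ^ 2 = 1 + (‖c‖ ^ 2 + ‖y‖ ^ 2) * P) (hz : ‖z‖ = 1) :
    1 + ‖c + y * z‖ ^ 2 * P = ‖(p : ℂ) + (P / p : ℂ) * (starRingEnd ℂ c * y) * z‖ ^ 2 := by
  have hre : (starRingEnd ℂ (p : ℂ) * ((P / p : ℂ) * (starRingEnd ℂ c * y)) * z).re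
      = P * (starRingEnd ℂ c * y * z).re := by
    rw [Complex.conj_ofReal, ← mul_assoc, mul_div_cancel₀ _ (by exact_mod_cast hp),
      mul_assoc, Complex.re_ofReal_mul]
  rw [sq_norm_add_mul_of_norm_eq_one _ _ hz, sq_norm_add_mul_of_norm_eq_one _ _ hz, hre,
    norm_mul, norm_mul, Complex.norm_conj, ← Complex.ofReal_div, Complex.norm_real,
    Complex.norm_real, Real.norm_eq_abs, Real.norm_eq_abs, mul_pow, sq_abs, sq_abs]
  linear_combination -hpq

noncomputable def uniformPhaseRate (P a r : ℝ) : ℝ :=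
  log ((1 + (a ^ 2 + r ^ 2) * P + √((1 + (a ^ 2 + r ^ 2) * P) ^ 2 - (2 * a * r * P) ^ 2)) / 2)

theorem circleAverage_log_one_add_sq_norm_add_mul {P : ℝ} (hP : 0 ≤ P) (c y : ℂ) :
    circleAverage (fun z => log (1 + ‖c + y * z‖ ^ 2 * P)) 0 1 = uniformPhaseRate P ‖c‖ ‖y‖ := by
  set A := 1 + (‖c‖ ^ 2 + ‖y‖ ^ 2) * P
  set B := 2 * ‖c‖ * ‖y‖ * P
  have hB : 0 ≤ B := by positivity
  have hBA : B + 1 ≤ A := by nlinarith [sq_nonneg (‖c‖ - ‖y‖)]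
  -- `m = p²` is the larger root of `m² - A m + (B / 2)² = 0`, so that `p² + (B / (2 p))² = A`
  set m := (A + √(A ^ 2 - B ^ 2)) / 2 with hm
  have hsq := Real.sq_sqrt (by nlinarith : 0 ≤ A ^ 2 - B ^ 2)
  have hm0 : 0 < m := by positivity
  have hmB : B / 2 < m := by rw [hm]; linarith [Real.sqrt_nonneg (A ^ 2 - B ^ 2)]
  set p := √m
  have hp : 0 < p := Real.sqrt_pos.2 hm0
  have hpm : p ^ 2 = m := Real.sq_sqrt hm0.le
  have hw : ‖(P / p : ℂ) * (starRingEnd ℂ c * y)‖ = ‖c‖ * ‖y‖ * P / p := by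
    rw [norm_mul, norm_mul, Complex.norm_conj, ← Complex.ofReal_div, Complex.norm_of_nonneg
      (div_nonneg hP hp.le)]
    ring
  have hwp : ‖(P / p : ℂ) * (starRingEnd ℂ c * y)‖ < ‖(p : ℂ)‖ := by
    rw [hw, Complex.norm_of_nonneg hp.le, div_lt_iff₀ hp]
    nlinarith
  have hpq : p ^ 2 + (‖c‖ * ‖y‖ * P / p) ^ 2 = A := by
    rw [div_pow, hpm]
    field_simp
    linear_combination hsq / 4
  calc circleAverage (fun z => log (1 + ‖c + y * z‖ ^ 2 * P)) 0 1
      = circleAverage (fun z =>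
          (2 : ℝ) • log ‖(p : ℂ) + (P / p : ℂ) * (starRingEnd ℂ c * y) * z‖) 0 1 := by
        refine circleAverage_congr_sphere fun z hz => ?_
        rw [abs_one, mem_sphere_zero_iff_norm] at hz
        rw [one_add_sq_norm_add_mul_eq hp.ne' hpq hz, Real.log_pow, smul_eq_mul]
        norm_num
    _ = log m := by
        rw [circleAverage_fun_smul, circleAverage_log_norm_add_mul hwp, smul_eq_mul,
          Complex.norm_of_nonneg hp.le, ← hpm, Real.log_pow]
        norm_num

theorem uniformPhaseRate_monotoneOn {P : ℝ} (hP : 0 ≤ P) (a : ℝ) :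
    MonotoneOn (uniformPhaseRate P a) (Set.Ici 0) := by
  intro r₀ hr₀ r₁ _ hr
  rw [Set.mem_Ici] at hr₀
  -- `A² - B² = X² + 4 P a²` with `X = 1 + P (r² - a²)`: from `r₀` to `r₁`, `A` grows by
  -- `Δ = P (r₁² - r₀²)` while `√(A² - B²)` drops by at most `Δ`
  have hE : ∀ r, (1 + (a ^ 2 + r ^ 2) * P) ^ 2 - (2 * a * r * P) ^ 2
      = (1 + P * (r ^ 2 - a ^ 2)) ^ 2 + 4 * P * a ^ 2 := fun r => by ring
  set X := 1 + P * (r₁ ^ 2 - a ^ 2)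
  set Δ := P * (r₁ ^ 2 - r₀ ^ 2)
  have hΔ : 0 ≤ Δ := mul_nonneg hP (by nlinarith)
  have hX : -X ≤ √(X ^ 2 + 4 * P * a ^ 2) :=
    (neg_le_abs X).trans ((Real.sqrt_sq_eq_abs X).symm.trans_le
      (Real.sqrt_le_sqrt (le_add_of_nonneg_right (by positivity))))
  have hsqrt : √((1 + P * (r₀ ^ 2 - a ^ 2)) ^ 2 + 4 * P * a ^ 2)
      ≤ Δ + √(X ^ 2 + 4 * P * a ^ 2) := by
    have := Real.sq_sqrt (by positivity : 0 ≤ X ^ 2 + 4 * P * a ^ 2)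
    rw [Real.sqrt_le_iff]
    exact ⟨by positivity, by nlinarith⟩
  unfold uniformPhaseRate
  rw [hE, hE]
  apply Real.log_le_log (by positivity)
  linarith

theorem norm_one_sub_half_add_half_mul_le {w : ℂ} (hw : ‖w‖ = 1) (d : ℝ) :
    ‖(1 - ((1 / 2 : ℝ) : ℂ)) + ((1 / 2 : ℝ) : ℂ) * w‖ ≤ ‖(1 - (d : ℂ)) + d * w‖ := by
  have hsq : ∀ t : ℝ, ‖(1 - (t : ℂ)) + t * w‖ ^ 2 = (1 - t) ^ 2 + t ^ 2 + 2 * (1 - t) * t * w.re :=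
    fun t => by
      rw [show (1 - (t : ℂ)) = ((1 - t : ℝ) : ℂ) by push_cast; ring,
        sq_norm_add_mul_of_norm_eq_one _ _ hw, Complex.conj_ofReal, ← Complex.ofReal_mul,
        Complex.re_ofReal_mul, Complex.norm_real, Complex.norm_real, Real.norm_eq_abs,
        Real.norm_eq_abs, sq_abs, sq_abs]
      ring
  refine (pow_le_pow_iff_left₀ (norm_nonneg _) (norm_nonneg _) two_ne_zero).1 ?_
  rw [hsq, hsq]
  nlinarith [mul_nonneg (sq_nonneg (d - 1 / 2)) (sub_nonneg.2 (hw ▸ Complex.re_le_norm w))]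

noncomputable def uniformPhase : Measure ℝ :=
  (ENNReal.ofReal (2 * π))⁻¹ • volume.restrict (Set.Icc 0 (2 * π))

instance : IsProbabilityMeasure uniformPhase where
  measure_univ := by
    rw [uniformPhase, Measure.smul_apply, Measure.restrict_apply_univ, Real.volume_Icc, sub_zero,
      smul_eq_mul, ENNReal.inv_mul_cancel (by simp [pi_pos]) ENNReal.ofReal_ne_top]

theorem integral_uniformPhase (f : ℂ → ℝ) :
    ∫ x, f (Complex.exp (x * Complex.I)) ∂uniformPhase = circleAverage f 0 1 := by
  rw [uniformPhase, integral_smul_measure, ENNReal.toReal_inv,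
    ENNReal.toReal_ofReal (by positivity), smul_eq_mul, circleAverage_def, smul_eq_mul,
    intervalIntegral.integral_of_le (by positivity), integral_Icc_eq_integral_Ioc]
  simp [circleMap_zero]

theorem abs_log_one_add_sq_norm_mul_le {P K : ℝ} (hP : 0 ≤ P) {z : ℂ} (hz : ‖z‖ ≤ K) :
    |log (1 + ‖z‖ ^ 2 * P)| ≤ log (1 + K ^ 2 * P) := by
  have h1 : 1 ≤ 1 + ‖z‖ ^ 2 * P := le_add_of_nonneg_right (by positivity)
  rw [abs_of_nonneg (Real.log_nonneg h1)]
  exact Real.log_le_log (by linarith) (by gcongr)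

section

variable {Ω : Type*} [MeasurableSpace Ω] {μ : Measure Ω} [IsProbabilityMeasure μ] {P : ℝ}

theorem integral_log_one_add_sq_norm_add_mul_exp_le {C : Ω → ℂ} {Θ : Ω → ℝ}
    (hC : Measurable C) (hΘ : Measurable Θ) (hCΘ : IndepFun C Θ μ) (hΘunif : μ.map Θ = uniformPhase)
    {M : ℝ} (hCM : ∀ ω, ‖C ω‖ ≤ M) (hP : 0 ≤ P) {y y' : ℂ} (hy : ‖y‖ ≤ ‖y'‖) :
    ∫ ω, log (1 + ‖C ω + y * Complex.exp (Θ ω * Complex.I)‖ ^ 2 * P) ∂μ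
      ≤ ∫ ω, log (1 + ‖C ω + y' * Complex.exp (Θ ω * Complex.I)‖ ^ 2 * P) ∂μ := by
  set f : ℂ → ℂ × ℝ → ℝ := fun y p => log (1 + ‖p.1 + y * Complex.exp (p.2 * Complex.I)‖ ^ 2 * P)
  have hCΘm : Measurable fun ω => (C ω, Θ ω) := hC.prodMk hΘ
  have hlaw : μ.map (fun ω => (C ω, Θ ω)) = (μ.map C).prod uniformPhase :=
    hΘunif ▸ (indepFun_iff_map_prod_eq_prod_map_map hC.aemeasurable hΘ.aemeasurable).1 hCΘ
  have hf : ∀ y, Continuous (f y) := fun y =>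
    Continuous.log (by fun_prop) fun p => (by positivity : (0 : ℝ) < _).ne'
  have hint : ∀ y, Integrable (f y) ((μ.map C).prod uniformPhase) := by
    intro y
    rw [← hlaw, integrable_map_measure (hf y).aestronglyMeasurable hCΘm.aemeasurable]
    refine Integrable.of_bound ((hf y).measurable.comp hCΘm).aestronglyMeasurable
      (log (1 + (M + ‖y‖) ^ 2 * P)) (Filter.Eventually.of_forall fun ω => ?_)
    refine abs_log_one_add_sq_norm_mul_le hP ((norm_add_le _ _).trans (add_le_add (hCM ω) ?_))
    rw [norm_mul, Complex.norm_exp_ofReal_mul_I, mul_one]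
  have hexpand : ∀ y, ∫ ω, f y (C ω, Θ ω) ∂μ = ∫ c, ∫ x, f y (c, x) ∂uniformPhase ∂(μ.map C) :=
    fun y => by
      rw [← integral_map hCΘm.aemeasurable (hf y).aestronglyMeasurable, hlaw,
        integral_prod _ (hint y)]
  have hinner : ∀ y c, ∫ x, f y (c, x) ∂uniformPhase = uniformPhaseRate P ‖c‖ ‖y‖ := fun y c => by
    rw [← circleAverage_log_one_add_sq_norm_add_mul hP, ← integral_uniformPhase]
  refine (hexpand y).trans_le ((integral_mono (hint y).integral_prod_left
    (hint y').integral_prod_left fun c => ?_).trans_eq (hexpand y').symm)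
  simp only [hinner]
  exact uniformPhaseRate_monotoneOn hP _ (norm_nonneg y) (norm_nonneg y') hy

variable {ι : Type*} [Fintype ι] {θ : ι → Ω → ℝ}

theorem integral_log_one_add_sq_norm_sum_update_le [DecidableEq ι] (hθ : ∀ l, Measurable (θ l))
    (hθindep : iIndepFun θ μ) (l : ι) (hθunif : μ.map (θ l) = uniformPhase) (hP : 0 ≤ P)
    (v : ι → ℂ) {y y' : ℂ} (hy : ‖y‖ ≤ ‖y'‖) :
    ∫ ω, log (1 + ‖∑ j, Function.update v l y j * Complex.exp (θ j ω * Complex.I)‖ ^ 2 * P) ∂μ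
      ≤ ∫ ω, log (1 + ‖∑ j, Function.update v l y' j * Complex.exp (θ j ω * Complex.I)‖ ^ 2 * P)
        ∂μ := by
  set S := Finset.univ.erase l
  set φ : (S → ℝ) → ℂ := fun x => ∑ j : S, v j * Complex.exp (x j * Complex.I)
  have hsplit : ∀ y ω, ∑ j, Function.update v l y j * Complex.exp (θ j ω * Complex.I)
      = φ (fun j => θ j ω) + y * Complex.exp (θ l ω * Complex.I) := by
    intro y ω
    rw [← Finset.add_sum_erase _ _ (Finset.mem_univ l), add_comm, Function.update_self]
    congr 1
    rw [← Finset.sum_coe_sort S]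
    exact Finset.sum_congr rfl fun j _ => by rw [Function.update_of_ne (Finset.ne_of_mem_erase j.2)]
  have hφ : Continuous φ := by fun_prop
  have hindep : IndepFun (fun ω => φ (fun j => θ j ω)) (θ l) μ :=
    (hθindep.indepFun_finset S {l} (by simp [S]) hθ).comp hφ.measurable
      (measurable_pi_apply (⟨l, Finset.mem_singleton_self l⟩ : ({l} : Finset ι)))
  simp only [hsplit]
  refine integral_log_one_add_sq_norm_add_mul_exp_le (hφ.measurable.comp (by fun_prop)) (hθ l)
    hindep hθunif (M := ∑ j : S, ‖v j‖) (fun ω => ?_) hP hy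
  refine (norm_sum_le _ _).trans (Finset.sum_le_sum fun j _ => ?_)
  rw [norm_mul, Complex.norm_exp_ofReal_mul_I, mul_one]

theorem integral_log_one_add_sq_norm_sum_mono (hθ : ∀ l, Measurable (θ l))
    (hθindep : iIndepFun θ μ) (hθunif : ∀ l, μ.map (θ l) = uniformPhase) (hP : 0 ≤ P)
    {v v' : ι → ℂ} (hv : ∀ l, ‖v l‖ ≤ ‖v' l‖) :
    ∫ ω, log (1 + ‖∑ l, v l * Complex.exp (θ l ω * Complex.I)‖ ^ 2 * P) ∂μ
      ≤ ∫ ω, log (1 + ‖∑ l, v' l * Complex.exp (θ l ω * Complex.I)‖ ^ 2 * P) ∂μ := by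
  classical
  suffices ∀ s : Finset ι,
      ∫ ω, log (1 + ‖∑ l, v l * Complex.exp (θ l ω * Complex.I)‖ ^ 2 * P) ∂μ
        ≤ ∫ ω, log (1 + ‖∑ l, s.piecewise v' v l * Complex.exp (θ l ω * Complex.I)‖ ^ 2 * P) ∂μ by
    simpa using this Finset.univ
  intro s
  induction s using Finset.induction_on with
  | empty => simp
  | insert a s ha ih =>
    refine ih.trans ?_
    rw [Finset.piecewise_insert]
    conv_lhs => rw [← Function.update_eq_self a (s.piecewise v' v)]
    rw [Finset.piecewise_eq_of_notMem _ _ _ ha]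
    exact integral_log_one_add_sq_norm_sum_update_le hθ hθindep a (hθunif a) hP _ (hv a)

end

theorem worst_case_delay_half_general
    {Ω : Type*} [MeasurableSpace Ω] (μ : Measure Ω) [IsProbabilityMeasure μ]
    (L : ℕ) (θ : Fin L → Ω → ℝ) (hθmeas : ∀ l, Measurable (θ l))
    (hθindep : iIndepFun θ μ)
    (hθunif : ∀ l, μ.map (θ l)
      = (ENNReal.ofReal (2 * π))⁻¹ • volume.restrict (Set.Icc 0 (2 * π)))
    (P : ℝ) (hP : 0 < P) (K : ℕ) (k : ℕ)
    (b : Fin L → ℝ)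
    (F : (Fin L → ℝ) → ℝ)
    (hF : ∀ δ : Fin L → ℝ,
      F δ = ∫ ω, Real.log (1 + ‖
          (∑ l, (b l : ℂ) * Complex.exp (θ l ω * Complex.I)
            * ((1 - (δ l : ℂ))
                + (δ l : ℂ) * Complex.exp (-(2 * π * k / K) * Complex.I)))‖ ^ 2
          * P) ∂μ) :
    ∀ δ : Fin L → ℝ, (∀ l, 0 ≤ δ l ∧ δ l < 1) →
      F (fun _ => 1 / 2) ≤ F δ := by
  intro δ _
  set w := Complex.exp (-(2 * π * k / K) * Complex.I)
  have hw : ‖w‖ = 1 := by simp [w, Complex.norm_exp]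
  simp only [hF, mul_right_comm _ (Complex.exp (_ * Complex.I))]
  refine integral_log_one_add_sq_norm_sum_mono hθmeas hθindep hθunif hP.le fun l => ?_
  rw [norm_mul, norm_mul]
  exact mul_le_mul_of_nonneg_left (norm_one_sub_half_add_half_mul_le hw (δ l)) (norm_nonneg _)

/-- Worst-case fractional delays: with i.i.d. `θ_l ~ Uniform(0,2π)`,
`b ∈ {0,1}^L`, and `G_l(k) = (1−δ_l) + δ_l e^{−2πik/K}`, the per-subcarrier
rate `F(b, δ, k) = E[log(1 + |∑ b_l e^{iθ_l} G_l(k)|² P)]` is minimized over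
`δ ∈ [0,1)^L` at `δ = (1/2,…,1/2)`. -/
theorem worst_case_delay_half
    {Ω : Type*} [MeasurableSpace Ω] (μ : Measure Ω) [IsProbabilityMeasure μ]
    (L : ℕ) (θ : Fin L → Ω → ℝ) (hθmeas : ∀ l, Measurable (θ l))
    (hθindep : iIndepFun θ μ)
    (hθunif : ∀ l, μ.map (θ l)
      = (ENNReal.ofReal (2 * π))⁻¹ • volume.restrict (Set.Icc 0 (2 * π)))
    (P : ℝ) (hP : 0 < P) (K : ℕ) (hK : 1 ≤ K) (k : ℕ) (hk : k < K)
    (b : Fin L → ℝ) (hb : ∀ l, b l = 0 ∨ b l = 1)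
    (F : (Fin L → ℝ) → ℝ)
    (hF : ∀ δ : Fin L → ℝ,
      F δ = ∫ ω, Real.log (1 + ‖
          (∑ l, (b l : ℂ) * Complex.exp (θ l ω * Complex.I)
            * ((1 - (δ l : ℂ))
                + (δ l : ℂ) * Complex.exp (-(2 * π * k / K) * Complex.I)))‖ ^ 2
          * P) ∂μ) :
    ∀ δ : Fin L → ℝ, (∀ l, 0 ≤ δ l ∧ δ l < 1) →
      F (fun _ => 1 / 2) ≤ F δ :=
  worst_case_delay_half_general μ L θ hθmeas hθindep hθunif P hP K k b F hF
end
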